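/- Let φ : F → ℝ be locally Lipschitz. Then for each finite subset ϕ of F, the function λ_{φ,ϕ} : F → [0,∞), λ_{φ,ϕ}(f) = min_{y ∈ ∂φ(f)} ρ_ϕ(y), is sequentially lower semicontinuous: if f_n → f₀ in F, then λ_{φ,ϕ}(f₀) ≤ liminf_n λ_{φ,ϕ}(f_n). -/

import Mathlib

/- Setting: `F` (and `E`) are Fréchet spaces: complete topological vector spaces over ℝ
whose topology is generated by an increasing sequence of seminorms `p 0 ≤ p 1 ≤ ⋯`
(`Monotone p` together with `WithSeminorms p`).  The first seminorm of the family,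
written `‖·‖¹` in the paper, is `p 0`.  The dual `F'` with its weak* topology is
`WeakDual ℝ F`. -/

open Filter Topology

section Defs

variable {E F : Type*}
  [AddCommGroup E] [Module ℝ E] [UniformSpace E] [IsUniformAddGroup E] [ContinuousSMul ℝ E]
  [AddCommGroup F] [Module ℝ F] [UniformSpace F] [IsUniformAddGroup F] [ContinuousSMul ℝ F]

/-- Clarke's generalized directional derivative
`φ°(f;g) = limsup_{h → f, t ↓ 0} (φ(h+tg) − φ(h))/t`. -/
noncomputable def clarkeDeriv (φ : F → ℝ) (f g : F) : ℝ :=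
  Filter.limsup (fun q : F × ℝ => (φ (q.1 + q.2 • g) - φ q.1) / q.2)
    ((𝓝 f) ×ˢ (𝓝[>] (0 : ℝ)))

/-- The Clarke subdifferential `∂φ(f) = {f' ∈ F' : ⟨f',g⟩ ≤ φ°(f;g) ∀ g}`, a subset of
the dual equipped with the weak* topology. -/
def clarkeSubdiff (φ : F → ℝ) (f : F) : Set (WeakDual ℝ F) :=
  {u | ∀ g : F, u g ≤ clarkeDeriv φ f g}

/-- Locally Lipschitz with respect to the first seminorm `p 0` of the defining
increasing family of seminorms (as used throughout the paper). -/
def LocLip (p : ℕ → Seminorm ℝ F) (φ : F → ℝ) : Prop :=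
  ∀ x : F, ∃ U ∈ 𝓝 x, ∃ K : ℝ, 0 ≤ K ∧ ∀ a ∈ U, ∀ b ∈ U, |φ a - φ b| ≤ K * (p 0) (a - b)

/-- The weak* seminorm `ρ_ϕ(y) = sup_{x ∈ ϕ} |y x|` attached to a finite set `ϕ`. -/
noncomputable def dualSeminorm (s : Finset F) (y : WeakDual ℝ F) : ℝ :=
  ⨆ x ∈ s, |y x|

/-- `λ_{φ,ϕ}(f) = min_{y ∈ ∂φ(f)} ρ_ϕ(y)`. -/
noncomputable def lam (φ : F → ℝ) (s : Finset F) (f : F) : ℝ :=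
  sInf (dualSeminorm s '' clarkeSubdiff φ f)

/-- The Chang Palais–Smale condition. -/
def ChangPS (φ : F → ℝ) : Prop :=
  ∀ u : ℕ → F, (∃ C : ℝ, ∀ n, |φ (u n)| ≤ C) →
    (∀ s : Finset F, Tendsto (fun n => lam φ s (u n)) atTop (𝓝 0)) →
    ∃ g : ℕ → ℕ, StrictMono g ∧ ∃ x : F, Tendsto (u ∘ g) atTop (𝓝 x)

/-- The Chang Palais–Smale condition at level `c`. -/
def ChangPSAt (φ : F → ℝ) (c : ℝ) : Prop :=
  ∀ u : ℕ → F, Tendsto (fun n => φ (u n)) atTop (𝓝 c) →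
    (∀ s : Finset F, Tendsto (fun n => lam φ s (u n)) atTop (𝓝 0)) →
    ∃ g : ℕ → ℕ, StrictMono g ∧ ∃ x : F, Tendsto (u ∘ g) atTop (𝓝 x)

/-- Keller `C¹_c` on a set `U`, with derivative family `D`: directional derivatives exist,
each `D x` is continuous linear, and `(x,h) ↦ D x h` is jointly continuous. -/
def C1cOn (τ : E → F) (D : E → (E →L[ℝ] F)) (U : Set E) : Prop :=
  (∀ x ∈ U, ∀ h : E,
      Tendsto (fun t : ℝ => t⁻¹ • (τ (x + t • h) - τ x)) (𝓝[≠] (0 : ℝ)) (𝓝 (D x h))) ∧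
  ContinuousOn (fun q : E × E => D q.1 q.2) (U ×ˢ (Set.univ : Set E))

/-- Keller `C¹_c` on a set (derivative existential). -/
def IsC1cOn (τ : E → F) (U : Set E) : Prop :=
  ∃ D : E → (E →L[ℝ] F), C1cOn τ D U

/-- Local `C¹_c`-diffeomorphism: every point has an open neighbourhood mapped bijectively
onto an open set, `τ` being `C¹_c` there with a `C¹_c` inverse. -/
def IsLocalC1cDiffeo (τ : E → F) : Prop :=
  ∀ x : E, ∃ U : Set E, IsOpen U ∧ x ∈ U ∧ ∃ V : Set F, IsOpen V ∧ Set.BijOn τ U V ∧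
    IsC1cOn τ U ∧ ∃ σ : F → E, (∀ y ∈ V, τ (σ y) = y) ∧ (∀ x' ∈ U, σ (τ x') = x') ∧
      IsC1cOn σ V

end Defs

/-! Near `f₀` the function `φ` is `K`-Lipschitz for the continuous seminorm `q = p 0`, so
`φ°(f; ·)` is sublinear and bounded by `K q`; by Hahn–Banach every `∂φ(f)` with `f` near `f₀`
is then a nonempty subset of the weak*-compact set `{y | |y| ≤ K q}`. Given
`c > liminf λ(f_n)`, pick `y_n ∈ ∂φ(f_n)` with `ρ_ϕ(y_n) < c` along the indices where
`λ(f_n) < c`. A weak* cluster point of `(y_n)` lies in `∂φ(f₀)`, because `φ°(·; g)` is upper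
semicontinuous, and has `ρ_ϕ ≤ c`, because sublevel sets of `ρ_ϕ` are weak* closed. -/

open scoped NNReal

section Algebra

variable {F : Type*} [AddCommGroup F] [Module ℝ F]

def SeminormLipschitzOn (q : Seminorm ℝ F) (K : ℝ≥0) (φ : F → ℝ) (U : Set F) : Prop :=
  ∀ a ∈ U, ∀ b ∈ U, |φ a - φ b| ≤ K * q (a - b)

noncomputable def clarkeQuotient (φ : F → ℝ) (g : F) (z : F × ℝ) : ℝ :=
  (φ (z.1 + z.2 • g) - φ z.1) / z.2

theorem clarkeQuotient_add (φ : F → ℝ) (g₁ g₂ : F) (z : F × ℝ) :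
    clarkeQuotient φ (g₁ + g₂) z =
      clarkeQuotient φ g₁ (z.1 + z.2 • g₂, z.2) + clarkeQuotient φ g₂ z := by
  simp only [clarkeQuotient, smul_add, add_assoc, add_comm (z.2 • g₁)]
  ring

theorem clarkeQuotient_smul (φ : F → ℝ) (g : F) (z : F × ℝ) {c : ℝ} (hc : c ≠ 0) :
    clarkeQuotient φ (c • g) z = c * clarkeQuotient φ g (z.1, c * z.2) := by
  rcases eq_or_ne z.2 0 with h | h
  · simp [clarkeQuotient, h]
  · simp only [clarkeQuotient, smul_smul, mul_comm z.2 c]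
    field_simp

end Algebra

abbrev clarkeFilter {F : Type*} [TopologicalSpace F] (f : F) : Filter (F × ℝ) :=
  𝓝 f ×ˢ 𝓝[>] 0

theorem tendsto_snd_clarkeFilter {F : Type*} [TopologicalSpace F] (f : F) :
    Tendsto Prod.snd (clarkeFilter f) (𝓝 (0 : ℝ)) :=
  tendsto_snd.mono_right nhdsWithin_le_nhds

theorem tendsto_shift_clarkeFilter {F : Type*} [AddCommGroup F] [Module ℝ F]
    [TopologicalSpace F] [ContinuousAdd F] [ContinuousSMul ℝ F] (f g : F) :
    Tendsto (fun z : F × ℝ => (z.1 + z.2 • g, z.2)) (clarkeFilter f) (clarkeFilter f) := by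
  refine Tendsto.prodMk ?_ tendsto_snd
  simpa using tendsto_fst.add ((tendsto_snd_clarkeFilter f).smul_const g)

theorem tendsto_rescale_clarkeFilter {F : Type*} [TopologicalSpace F] (f : F) {c : ℝ}
    (hc : 0 < c) :
    Tendsto (fun z : F × ℝ => (z.1, c * z.2)) (clarkeFilter f) (clarkeFilter f) := by
  refine tendsto_fst.prodMk (tendsto_nhdsWithin_iff.2 ⟨?_, ?_⟩)
  · simpa using (tendsto_snd_clarkeFilter f).const_mul c
  · exact (tendsto_snd.eventually self_mem_nhdsWithin).mono fun z hz => mul_pos hc hz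

theorem clarkeDeriv_zero {F : Type*} [AddCommGroup F] [Module ℝ F] [UniformSpace F]
    (φ : F → ℝ) (f : F) : clarkeDeriv φ f 0 = 0 := by
  simp [clarkeDeriv]

theorem LinearMap.continuous_of_abs_le_mul_seminorm {F : Type*} [AddCommGroup F] [Module ℝ F]
    [TopologicalSpace F] [IsTopologicalAddGroup F] {q : Seminorm ℝ F} (hq : Continuous q)
    {K : ℝ≥0} (g : F →ₗ[ℝ] ℝ) (hg : ∀ x, |g x| ≤ K * q x) : Continuous g :=
  (norm_withSeminorms ℝ ℝ).continuous_of_continuous_comp g fun _ =>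
    Seminorm.continuous_of_le (q := K • q) (hq.const_smul K) fun x => by
      simpa [NNReal.smul_def] using hg x

theorem WeakDual.isCompact_setOf_abs_le {F : Type*} [AddCommGroup F] [Module ℝ F]
    [TopologicalSpace F] [IsTopologicalAddGroup F] {q : Seminorm ℝ F} (hq : Continuous q)
    (K : ℝ≥0) : IsCompact {y : WeakDual ℝ F | ∀ x, |y x| ≤ K * q x} := by
  refine DFunLike.coe_injective.isEmbedding_induced.isCompact_iff.2 ?_
  have himage : (⇑) '' {y : WeakDual ℝ F | ∀ x, |y x| ≤ K * q x} =
      Set.range ((⇑) : (F →ₗ[ℝ] ℝ) → F → ℝ) ∩ {u | ∀ x, |u x| ≤ K * q x} := by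
    ext u
    constructor
    · rintro ⟨y, hy, rfl⟩
      exact ⟨⟨y.toLinearMap, rfl⟩, hy⟩
    · rintro ⟨⟨g, rfl⟩, hg⟩
      exact ⟨⟨g, g.continuous_of_abs_le_mul_seminorm hq hg⟩, hg, rfl⟩
  rw [himage, Set.ofPred_forall]
  refine (isCompact_univ_pi fun x => isCompact_Icc).of_isClosed_subset
    ((LinearMap.isClosed_range_coe _ _ _).inter
      (isClosed_iInter fun x => isClosed_le (continuous_apply x).abs continuous_const))
    fun u hu x _ => abs_le.1 (Set.mem_iInter.1 hu.2 x)

section Lam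

variable {F : Type*} [AddCommGroup F] [Module ℝ F] [UniformSpace F] {s : Finset F}
  {y : WeakDual ℝ F} {c : ℝ}

theorem dualSeminorm_nonneg (s : Finset F) (y : WeakDual ℝ F) : 0 ≤ dualSeminorm s y :=
  Real.iSup_nonneg fun _ => Real.iSup_nonneg fun _ => abs_nonneg _

theorem dualSeminorm_le_iff (hc : 0 ≤ c) : dualSeminorm s y ≤ c ↔ ∀ x ∈ s, |y x| ≤ c := by
  refine ⟨fun h x hx => ?_, fun h => Real.iSup_le (fun x => Real.iSup_le (h x) hc) hc⟩
  by_contra! hlt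
  exact (((s.finite_toSet.ciSup_lt_iff ⟨x, hx, by simp⟩).1 (h.trans_lt hlt)) x hx).false

theorem isClosed_setOf_dualSeminorm_le (s : Finset F) (hc : 0 ≤ c) :
    IsClosed {y : WeakDual ℝ F | dualSeminorm s y ≤ c} := by
  simp only [dualSeminorm_le_iff hc, Set.ofPred_forall]
  exact isClosed_biInter fun x _ => isClosed_le (WeakDual.eval_continuous x).abs continuous_const

theorem lam_nonneg (φ : F → ℝ) (s : Finset F) (f : F) : 0 ≤ lam φ s f :=
  Real.sInf_nonneg (by rintro _ ⟨y, -, rfl⟩; exact dualSeminorm_nonneg s y)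

theorem lam_le_dualSeminorm {φ : F → ℝ} {f : F} (hy : y ∈ clarkeSubdiff φ f) :
    lam φ s f ≤ dualSeminorm s y :=
  csInf_le ⟨0, by rintro _ ⟨y', -, rfl⟩; exact dualSeminorm_nonneg s y'⟩ ⟨y, hy, rfl⟩

theorem exists_dualSeminorm_lt_of_lam_lt {φ : F → ℝ} {f : F}
    (hne : (clarkeSubdiff φ f).Nonempty) (h : lam φ s f < c) :
    ∃ y ∈ clarkeSubdiff φ f, dualSeminorm s y < c := by
  obtain ⟨_, ⟨y, hy, rfl⟩, hlt⟩ := exists_lt_of_csInf_lt (hne.image _) h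
  exact ⟨y, hy, hlt⟩

end Lam

namespace SeminormLipschitzOn

section ClarkeDeriv

variable {F : Type*} [AddCommGroup F] [Module ℝ F] [UniformSpace F] [ContinuousAdd F]
  [ContinuousSMul ℝ F] {q : Seminorm ℝ F} {K : ℝ≥0} {φ : F → ℝ} {U : Set F} {f : F}

theorem eventually_abs_clarkeQuotient_le (hL : SeminormLipschitzOn q K φ U) (hU : U ∈ 𝓝 f)
    (g : F) : ∀ᶠ z in clarkeFilter f, |clarkeQuotient φ g z| ≤ K * q g := by
  have hshift := (tendsto_shift_clarkeFilter f g).eventually (tendsto_fst.eventually hU)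
  filter_upwards [tendsto_fst.eventually hU, hshift, tendsto_snd.eventually self_mem_nhdsWithin]
    with z hz hz' (ht : 0 < z.2)
  rw [clarkeQuotient, abs_div, abs_of_pos ht, div_le_iff₀ ht]
  calc |φ (z.1 + z.2 • g) - φ z.1| ≤ K * q (z.1 + z.2 • g - z.1) := hL _ hz' _ hz
    _ = K * q g * z.2 := by
      rw [add_sub_cancel_left, map_smul_eq_mul, Real.norm_of_nonneg ht.le]
      ring

theorem clarkeDeriv_le_iff (hL : SeminormLipschitzOn q K φ U) (hU : U ∈ 𝓝 f) {g : F} {c : ℝ} :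
    clarkeDeriv φ f g ≤ c ↔ ∀ b > c, ∀ᶠ z in clarkeFilter f, clarkeQuotient φ g z < b := by
  have hb := hL.eventually_abs_clarkeQuotient_le hU g
  exact limsup_le_iff
    (isBoundedUnder_of_eventually_ge (hb.mono fun _ => neg_le_of_abs_le)).isCoboundedUnder_le
    (isBoundedUnder_of_eventually_le (hb.mono fun _ => le_of_abs_le))

theorem eventually_clarkeQuotient_lt (hL : SeminormLipschitzOn q K φ U) (hU : U ∈ 𝓝 f) {g : F}
    {b : ℝ} (hb : clarkeDeriv φ f g < b) : ∀ᶠ z in clarkeFilter f, clarkeQuotient φ g z < b :=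
  (hL.clarkeDeriv_le_iff hU).1 le_rfl b hb

theorem clarkeDeriv_le (hL : SeminormLipschitzOn q K φ U) (hU : U ∈ 𝓝 f) (g : F) :
    clarkeDeriv φ f g ≤ K * q g :=
  (hL.clarkeDeriv_le_iff hU).2 fun _ hb => (hL.eventually_abs_clarkeQuotient_le hU g).mono
    fun _ hz => ((le_abs_self _).trans hz).trans_lt hb

theorem clarkeDeriv_add_le (hL : SeminormLipschitzOn q K φ U) (hU : U ∈ 𝓝 f) (g₁ g₂ : F) :
    clarkeDeriv φ f (g₁ + g₂) ≤ clarkeDeriv φ f g₁ + clarkeDeriv φ f g₂ := by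
  refine (hL.clarkeDeriv_le_iff hU).2 fun b hb => ?_
  obtain ⟨b₁, hb₁, hb₁b⟩ := exists_between (lt_sub_iff_add_lt.2 hb)
  filter_upwards [(tendsto_shift_clarkeFilter f g₂).eventually
      (hL.eventually_clarkeQuotient_lt hU hb₁),
    hL.eventually_clarkeQuotient_lt hU (lt_sub_comm.1 hb₁b)] with z h₁ h₂
  rw [clarkeQuotient_add]
  linarith

theorem clarkeDeriv_smul_le (hL : SeminormLipschitzOn q K φ U) (hU : U ∈ 𝓝 f) {c : ℝ}
    (hc : 0 < c) (g : F) : clarkeDeriv φ f (c • g) ≤ c * clarkeDeriv φ f g := by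
  refine (hL.clarkeDeriv_le_iff hU).2 fun b hb => ?_
  filter_upwards [(tendsto_rescale_clarkeFilter f hc).eventually
    (hL.eventually_clarkeQuotient_lt hU ((lt_div_iff₀' hc).2 hb))] with z hz
  rw [clarkeQuotient_smul φ g z hc.ne']
  exact (lt_div_iff₀' hc).1 hz

theorem clarkeDeriv_smul (hL : SeminormLipschitzOn q K φ U) (hU : U ∈ 𝓝 f) {c : ℝ}
    (hc : 0 < c) (g : F) : clarkeDeriv φ f (c • g) = c * clarkeDeriv φ f g := by
  refine le_antisymm (hL.clarkeDeriv_smul_le hU hc g) ?_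
  have h := hL.clarkeDeriv_smul_le hU (inv_pos.2 hc) (c • g)
  rwa [inv_smul_smul₀ hc.ne', le_inv_mul_iff₀ hc] at h

theorem upperSemicontinuousAt_clarkeDeriv (hL : SeminormLipschitzOn q K φ U) (hU : U ∈ 𝓝 f)
    (g : F) : UpperSemicontinuousAt (fun f' => clarkeDeriv φ f' g) f := by
  intro c hc
  obtain ⟨c', hc', hc'c⟩ := exists_between hc
  obtain ⟨W, hW, V, hV, hWV⟩ := mem_prod_iff.1 (hL.eventually_clarkeQuotient_lt hU hc')
  filter_upwards [eventually_mem_nhds_iff.2 hW, eventually_mem_nhds_iff.2 hU] with f' hWf hUf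
  refine lt_of_le_of_lt ((hL.clarkeDeriv_le_iff hUf).2 fun b hb => ?_) hc'c
  filter_upwards [prod_mem_prod hWf hV] with z hz using (hWV hz).trans hb

theorem abs_apply_le_of_mem_clarkeSubdiff (hL : SeminormLipschitzOn q K φ U) (hU : U ∈ 𝓝 f)
    {y : WeakDual ℝ F} (hy : y ∈ clarkeSubdiff φ f) (x : F) : |y x| ≤ K * q x :=
  Seminorm.abs_le_of_le (p := K • q) (f := y.toLinearMap)
    (fun x => (hy x).trans (hL.clarkeDeriv_le hU x)) x

theorem mem_clarkeSubdiff_of_mapClusterPt (hL : SeminormLipschitzOn q K φ U) (hU : U ∈ 𝓝 f)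
    {ι : Type*} {l : Filter ι} {x : ι → F} {y : ι → WeakDual ℝ F} {y₀ : WeakDual ℝ F}
    (hx : Tendsto x l (𝓝 f)) (hy : ∀ᶠ i in l, y i ∈ clarkeSubdiff φ (x i))
    (hy₀ : MapClusterPt y₀ l y) : y₀ ∈ clarkeSubdiff φ f := by
  intro g
  refine le_of_forall_gt_imp_ge_of_dense fun c hc => ?_
  refine (isClosed_le (WeakDual.eval_continuous g) continuous_const).mem_of_mapClusterPt hy₀ ?_
  filter_upwards [hy, hx.eventually (hL.upperSemicontinuousAt_clarkeDeriv hU g c hc)]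
    with i hyi hci
  exact (hyi g).trans hci.le

end ClarkeDeriv

variable {F : Type*} [AddCommGroup F] [Module ℝ F] [UniformSpace F] [IsUniformAddGroup F]
  [ContinuousSMul ℝ F] {q : Seminorm ℝ F} {K : ℝ≥0} {φ : F → ℝ} {U : Set F} {f : F}

theorem clarkeSubdiff_nonempty (hL : SeminormLipschitzOn q K φ U) (hU : U ∈ 𝓝 f)
    (hq : Continuous q) : (clarkeSubdiff φ f).Nonempty := by
  obtain ⟨g, -, hg⟩ := exists_extension_of_le_sublinear ⟨⊥, 0⟩ (clarkeDeriv φ f)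
    (fun _ hc x => hL.clarkeDeriv_smul hU hc x) (hL.clarkeDeriv_add_le hU) (by
      rintro ⟨x, hx⟩
      obtain rfl : x = 0 := (Submodule.mem_bot ℝ).1 hx
      simp [clarkeDeriv_zero])
  have hgq : ∀ x, |g x| ≤ K * q x :=
    Seminorm.abs_le_of_le (p := K • q) fun x => (hg x).trans (hL.clarkeDeriv_le hU x)
  exact ⟨⟨g, g.continuous_of_abs_le_mul_seminorm hq hgq⟩, hg⟩

theorem lam_le_sum (hL : SeminormLipschitzOn q K φ U) (hU : U ∈ 𝓝 f) (hq : Continuous q)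
    (s : Finset F) : lam φ s f ≤ ∑ x ∈ s, K * q x := by
  obtain ⟨y, hy⟩ := hL.clarkeSubdiff_nonempty hU hq
  refine (lam_le_dualSeminorm hy).trans <|
    (dualSeminorm_le_iff (Finset.sum_nonneg fun x _ => by positivity)).2 fun x hx => ?_
  exact (hL.abs_apply_le_of_mem_clarkeSubdiff hU hy x).trans
    (Finset.single_le_sum (f := fun x => K * q x) (fun x _ => by positivity) hx)

theorem lam_le_of_tendsto (hL : SeminormLipschitzOn q K φ U) (hU : U ∈ 𝓝 f) (hq : Continuous q)
    {s : Finset F} {ι : Type*} {l : Filter ι} [l.NeBot] {x : ι → F} (hx : Tendsto x l (𝓝 f))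
    {c : ℝ} (hc : ∀ᶠ i in l, lam φ s (x i) < c) : lam φ s f ≤ c := by
  have hgood : ∀ᶠ i in l, ∃ y, U ∈ 𝓝 (x i) ∧ y ∈ clarkeSubdiff φ (x i) ∧
      dualSeminorm s y < c := by
    filter_upwards [hx.eventually (eventually_mem_nhds_iff.2 hU), hc] with i hUi hi
    obtain ⟨y, hy, hyc⟩ :=
      exists_dualSeminorm_lt_of_lam_lt (hL.clarkeSubdiff_nonempty hUi hq) hi
    exact ⟨y, hUi, hy, hyc⟩
  obtain ⟨y, hy⟩ := hgood.choice
  obtain ⟨y₀, -, hy₀⟩ :=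
    (WeakDual.isCompact_setOf_abs_le hq K).exists_mapClusterPt_of_frequently
      (hy.mono fun _ ⟨hUi, hyi, _⟩ => hL.abs_apply_le_of_mem_clarkeSubdiff hUi hyi).frequently
  have hc₀ : 0 ≤ c := let ⟨i, hi⟩ := hc.exists; (lam_nonneg φ s (x i)).trans hi.le
  calc lam φ s f ≤ dualSeminorm s y₀ := lam_le_dualSeminorm <|
        hL.mem_clarkeSubdiff_of_mapClusterPt hU hx (hy.mono fun _ h => h.2.1) hy₀
    _ ≤ c := (isClosed_setOf_dualSeminorm_le s hc₀).mem_of_mapClusterPt hy₀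
        (hy.mono fun _ h => h.2.2.le)

end SeminormLipschitzOn

theorem lam_sequentially_lsc_general
    {F : Type*} [AddCommGroup F] [Module ℝ F] [UniformSpace F] [IsUniformAddGroup F]
    [ContinuousSMul ℝ F]
    (p : ℕ → Seminorm ℝ F) (hsp : WithSeminorms p)
    (φ : F → ℝ) (hφ : LocLip p φ)
    (s : Finset F) (fseq : ℕ → F) (f₀ : F)
    (hconv : Filter.Tendsto fseq Filter.atTop (𝓝 f₀)) :
    lam φ s f₀ ≤ Filter.liminf (fun n => lam φ s (fseq n)) Filter.atTop := by
  obtain ⟨U, hU, K, hK, hL⟩ := hφ f₀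
  lift K to ℝ≥0 using hK
  have hL : SeminormLipschitzOn (p 0) K φ U := hL
  have hq : Continuous (p 0) := hsp.continuous_seminorm 0
  -- without an upper bound the real `liminf` would be the junk value `0`
  have hbdd : IsBoundedUnder (· ≤ ·) atTop fun n => lam φ s (fseq n) :=
    isBoundedUnder_of_eventually_le <| (hconv.eventually (eventually_mem_nhds_iff.2 hU)).mono
      fun _ hUn => hL.lam_le_sum hUn hq s
  refine le_of_forall_gt_imp_ge_of_dense fun c hc => ?_
  have := frequently_iff_neBot.1 (frequently_lt_of_liminf_lt hbdd.isCoboundedUnder_ge hc)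
  exact hL.lam_le_of_tendsto hU hq (hconv.mono_left inf_le_left)
    (mem_inf_of_right (mem_principal_self _))

/-- sequential lower semicontinuity of `λ_{φ,ϕ}`. -/
theorem lam_sequentially_lsc
    {F : Type*} [AddCommGroup F] [Module ℝ F] [UniformSpace F] [IsUniformAddGroup F]
    [ContinuousSMul ℝ F] [CompleteSpace F]
    (p : ℕ → Seminorm ℝ F) (hmono : Monotone p) (hsp : WithSeminorms p)
    (φ : F → ℝ) (hφ : LocLip p φ)
    (s : Finset F) (fseq : ℕ → F) (f₀ : F)
    (hconv : Filter.Tendsto fseq Filter.atTop (𝓝 f₀)) :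
    lam φ s f₀ ≤ Filter.liminf (fun n => lam φ s (fseq n)) Filter.atTop :=
  lam_sequentially_lsc_general p hsp φ hφ s fseq f₀ hconv
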